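/- arXiv:1611.04082 — 9 statements merged into one kernel-verified Lean document; each statement's English description precedes it below -/
import Mathlib

section
/- Suppose families of complex numbers k_i^{(m)} and h_i^{(m)} (indexed by i, m ∈ ℤ) satisfy (i - n)·k_i^{(m)} = (2m - n - i)·h_{n-m+i}^{(n)} for all m, n, i ∈ ℤ. Then there exists λ ∈ ℂ such that k_i^{(m)} = h_i^{(m)} = δ_{m,i}·λ for all m, i ∈ ℤ, where δ is the Kronecker delta. -/
theorem stmt0 (k h : ℤ → ℤ → ℂ)
    (H : ∀ m n i : ℤ, ((i : ℂ) - n) * k i m = (2 * (m : ℂ) - n - i) * h (n - m + i) n) :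
    ∃ lam : ℂ, ∀ m i : ℤ,
      k i m = (if m = i then lam else 0) ∧ h i m = (if m = i then lam else 0) := by
  have hcast : ∀ a b : ℤ, a ≠ b → ((a : ℂ) - b) ≠ 0 := by
    intro a b hab hc
    apply hab
    have : (a : ℂ) = b := by linear_combination hc
    exact_mod_cast this
  have hk0 : ∀ m i : ℤ, i ≠ m → k i m = 0 := by
    intro m i hne
    have h1 := H m (2 * m - i) i
    push_cast at h1
    have h2 : ((i : ℂ) - (2 * m - i)) * k i m = 0 := by
      rw [h1]; ring
    rcases mul_eq_zero.mp h2 with hc | hc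
    · exfalso
      have : ((i : ℂ) - (2 * m - i)) = 2 * ((i : ℂ) - m) := by ring
      rw [this] at hc
      rcases mul_eq_zero.mp hc with hc | hc
      · norm_num at hc
      · exact hcast i m hne hc
    · exact hc
  have hh0 : ∀ m i : ℤ, i ≠ m → h i m = 0 := by
    intro m i hne
    have h1 := H m m i
    rw [hk0 m i hne] at h1
    have h1' : ((m : ℂ) - i) * h (m - m + i) m = 0 := by
      linear_combination -h1
    simp only [sub_self, zero_add] at h1'
    rcases mul_eq_zero.mp h1' with hc | hc
    · exact absurd hc (hcast m i (Ne.symm hne))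
    · exact hc
  have F : ∀ m n : ℤ, m ≠ n → k m m = h n n := by
    intro m n hmn
    have h1 := H m n m
    have h2 : h (n - m + m) n = h n n := by ring_nf
    rw [h2] at h1
    have h3 : ((m : ℂ) - n) * k m m = ((m : ℂ) - n) * h n n := by
      rw [h1]; ring
    exact mul_left_cancel₀ (hcast m n hmn) h3
  have ha : ∀ m : ℤ, k m m = k 0 0 := by
    intro m
    rcases ne_or_eq m (-1) with hm | hm
    · rw [F m (m + 1) (by omega), ← F 0 (m + 1) (by omega)]
    · subst hm
      rw [F (-1) 1 (by norm_num), ← F 0 1 (by norm_num)]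
  have hb : ∀ m : ℤ, h m m = k 0 0 := by
    intro m
    rcases ne_or_eq m 0 with hm | hm
    · rw [← F 0 m (Ne.symm hm)]
    · subst hm
      rw [← F 1 0 (by norm_num), ha 1]
  refine ⟨k 0 0, fun m i => ?_⟩
  by_cases hmi : m = i
  · subst hmi
    simp only [if_pos rfl]
    exact ⟨ha m, hb m⟩
  · simp only [if_neg hmi]
    exact ⟨hk0 m i (Ne.symm hmi), hh0 m i (Ne.symm hmi)⟩
end

section
/- Suppose families of complex numbers t_i^{(m)} and g_i^{(m)} (indexed by i, m ∈ ℤ) satisfy (i - n/2)·t_i^{(m)} = (3m/2 - n - i)·g_{n-m+i}^{(n)} for all m, n, i ∈ ℤ. Then t_i^{(m)} = g_i^{(m)} = 0 for all m, i ∈ ℤ. -/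
theorem stmt1 (t g : ℤ → ℤ → ℂ)
    (H : ∀ m n i : ℤ, ((i : ℂ) - n / 2) * t i m = (3 * (m : ℂ) / 2 - n - i) * g (n - m + i) n) :
    ∀ m i : ℤ, t i m = 0 ∧ g i m = 0 := by
  have tz : ∀ m i : ℤ, t i m = 0 := by
    intro m i
    set a : ℤ := max m (2*m - 2*i) + 1 with ha
    have ham : a ≠ m := by
      have := le_max_left m (2*m - 2*i); omega
    have had : a ≠ 2*m - 2*i := by
      have := le_max_right m (2*m - 2*i); omega
    -- first show the auxiliary g value is zero
    have hB : g (2*a + 3*(i-m)) (2*a + 2*(i-m)) = 0 := by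
      have h1 := H a (2*a + 2*(i-m)) (a + (i-m))
      have hidx : (2*a + 2*(i-m)) - a + (a + (i-m)) = 2*a + 3*(i-m) := by ring
      rw [hidx] at h1
      push_cast at h1
      have hne : ((a : ℂ) + 2*i - 2*m) ≠ 0 := by
        have : ((a + 2*i - 2*m : ℤ) : ℂ) ≠ 0 := Int.cast_ne_zero.mpr (by omega)
        push_cast at this; convert this using 1
      have h2 : ((a : ℂ) + 2*i - 2*m) * g (2*a + 3*(i-m)) (2*a + 2*(i-m)) = 0 := by
        linear_combination (2/3 : ℂ) * h1
      exact (mul_eq_zero.mp h2).resolve_left hne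
    have h2 := H m (2*a + 2*(i-m)) i
    have hidx2 : (2*a + 2*(i-m)) - m + i = 2*a + 3*(i-m) := by ring
    rw [hidx2, hB, mul_zero] at h2
    push_cast at h2
    have hne2 : ((m : ℂ) - a) ≠ 0 := by
      have : ((m - a : ℤ) : ℂ) ≠ 0 := Int.cast_ne_zero.mpr (by omega)
      push_cast at this; convert this using 1
    have h3 : ((m : ℂ) - a) * t i m = 0 := by
      linear_combination h2
    exact (mul_eq_zero.mp h3).resolve_left hne2
  intro m i
  refine ⟨tz m i, ?_⟩
  have h4 := H (2*i+2) m (3*i+2-m)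
  have hidx : m - (2*i+2) + (3*i+2-m) = i := by ring
  rw [hidx, tz (2*i+2) (3*i+2-m), mul_zero] at h4
  push_cast at h4
  linear_combination -h4
end

section
/- Suppose families of complex numbers s_i^{(m)}, e_i^{(m)} and functions ρ₁, ρ₂, θ₁, θ₂ : ℤ → ℂ satisfy: (1) i·s_i^{(m)} = -(n - m + i)·e_{n-m+i}^{(n)} for all m, n, i ∈ ℤ with i ≠ 0 and i ≠ m - n; (2) ρ₁(m) + n·ρ₂(m) = -(n - m)·e_{n-m}^{(n)} for all m, n ∈ ℤ; (3) θ₁(n) + m·θ₂(n) = (m - n)·s_{m-n}^{(m)} for all m, n ∈ ℤ. Then there exists μ : ℤ → ℂ such that for all m ∈ ℤ and k ∈ ℤ with k ≠ -m: s_{m+k}^{(m)} = -e_{m+k}^{(m)} = μ(k)/(m + k), and moreover ρ₁(m) = θ₁(m) = μ(-m) and ρ₂(m) = θ₂(m) = 0 for all m ∈ ℤ. -/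
/-!
Taking `n = m` in (1) gives `e_i^{(m)} = -s_i^{(m)}` for `i ≠ 0`, after which (1) says that
`i * s_i^{(m)}` depends only on `m - i`; this common value is `μ (i - m)`. Conditions (2) and (3)
then say that the affine functions `n ↦ ρ₁ m + n * ρ₂ m` and `n ↦ θ₁ m + n * θ₂ m` take the
constant value `μ (-m)` for all `n ≠ m`, so their slopes vanish.
-/

theorem eq_and_eq_zero_of_add_mul_eq_of_ne {R : Type*} [CommRing R] {a b c : R} {m : ℤ}
    (h : ∀ n : ℤ, n ≠ m → a + n * b = c) : a = c ∧ b = 0 := by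
  have h₁ := h (m + 1) (by omega)
  have h₂ := h (m + 2) (by omega)
  push_cast at h₁ h₂
  exact ⟨by linear_combination ((m : R) + 2) * h₁ - ((m : R) + 1) * h₂,
    by linear_combination h₂ - h₁⟩

section

variable {K : Type*} [Field K] [CharZero K] {s e : ℤ → ℤ → K}

theorem e_eq_neg_s
    (H1 : ∀ m n i : ℤ, i ≠ 0 → i ≠ m - n →
      (i : K) * s i m = -(((n : K) - m + i) * e (n - m + i) n))
    {m i : ℤ} (hi : i ≠ 0) : e i m = -s i m := by
  have h := H1 m m i hi (by omega)
  simp only [sub_self, zero_add] at h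
  exact mul_left_cancel₀ (Int.cast_ne_zero.mpr hi) (by linear_combination h)

theorem mul_s_eq_of_sub_eq
    (H1 : ∀ m n i : ℤ, i ≠ 0 → i ≠ m - n →
      (i : K) * s i m = -(((n : K) - m + i) * e (n - m + i) n))
    {m n i j : ℤ} (hi : i ≠ 0) (hj : j ≠ 0) (h : m - i = n - j) :
    (i : K) * s i m = j * s j n := by
  have hj' : n - m + i = j := by omega
  have hjK : (n : K) - m + i = j := by exact_mod_cast hj'
  rw [H1 m n i hi (by omega), hj', hjK, e_eq_neg_s H1 hj]
  ring

theorem s_add_eq_div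
    (H1 : ∀ m n i : ℤ, i ≠ 0 → i ≠ m - n →
      (i : K) * s i m = -(((n : K) - m + i) * e (n - m + i) n))
    {m k : ℤ} (hk : m + k ≠ 0) : s (m + k) m = s 1 (1 - k) / ((m : K) + k) := by
  have h := mul_s_eq_of_sub_eq H1 hk one_ne_zero (n := 1 - k) (by ring)
  push_cast at h
  rw [eq_div_iff (by exact_mod_cast hk), mul_comm, h, one_mul]

theorem sub_mul_s_sub_eq
    (H1 : ∀ m n i : ℤ, i ≠ 0 → i ≠ m - n →
      (i : K) * s i m = -(((n : K) - m + i) * e (n - m + i) n))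
    {m n : ℤ} (hn : n ≠ m) : ((n : K) - m) * s (n - m) n = s 1 (1 + m) := by
  have h := mul_s_eq_of_sub_eq H1 (sub_ne_zero.mpr hn) one_ne_zero (n := 1 + m) (by ring)
  push_cast at h
  rw [h, one_mul]

theorem neg_sub_mul_e_sub_eq
    (H1 : ∀ m n i : ℤ, i ≠ 0 → i ≠ m - n →
      (i : K) * s i m = -(((n : K) - m + i) * e (n - m + i) n))
    {m n : ℤ} (hn : n ≠ m) : -(((n : K) - m) * e (n - m) n) = s 1 (1 + m) := by
  rw [e_eq_neg_s H1 (sub_ne_zero.mpr hn), mul_neg, neg_neg, sub_mul_s_sub_eq H1 hn]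

end

theorem stmt2 (s e : ℤ → ℤ → ℂ) (ρ₁ ρ₂ θ₁ θ₂ : ℤ → ℂ)
    (H1 : ∀ m n i : ℤ, i ≠ 0 → i ≠ m - n →
      (i : ℂ) * s i m = -(((n : ℂ) - m + i) * e (n - m + i) n))
    (H2 : ∀ m n : ℤ, ρ₁ m + (n : ℂ) * ρ₂ m = -(((n : ℂ) - m) * e (n - m) n))
    (H3 : ∀ m n : ℤ, θ₁ n + (m : ℂ) * θ₂ n = ((m : ℂ) - n) * s (m - n) m) :
    ∃ μ : ℤ → ℂ,
      (∀ m k : ℤ, k ≠ -m →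
        s (m + k) m = μ k / ((m : ℂ) + k) ∧ e (m + k) m = -(μ k / ((m : ℂ) + k))) ∧
      (∀ m : ℤ, ρ₁ m = μ (-m) ∧ θ₁ m = μ (-m) ∧ ρ₂ m = 0 ∧ θ₂ m = 0) := by
  refine ⟨fun k => s 1 (1 - k), fun m k hk => ?_, fun m => ?_⟩
  · have hs := s_add_eq_div H1 (show m + k ≠ 0 by omega)
    exact ⟨hs, by rw [e_eq_neg_s H1 (by omega), hs]⟩
  · obtain ⟨hρ₁, hρ₂⟩ := eq_and_eq_zero_of_add_mul_eq_of_ne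
      fun n hn => (H2 m n).trans (neg_sub_mul_e_sub_eq H1 hn)
    obtain ⟨hθ₁, hθ₂⟩ := eq_and_eq_zero_of_add_mul_eq_of_ne
      fun n hn => (H3 n m).trans (sub_mul_s_sub_eq H1 hn)
    simp only [sub_neg_eq_add]
    exact ⟨hρ₁, hθ₁, hρ₂, hθ₂⟩
end

section
/- Let SV be the twisted Schrödinger–Virasoro Lie algebra and let f : SV × SV → SV be the bilinear map with f(L_m, L_n) = 2017·M_{m+n+2016} for all m, n ∈ ℤ, and f(x, y) = 0 whenever x or y lies in the span of {Y_i, M_i : i ∈ ℤ}. Then f is a biderivation of SV, i.e., f([x,y], z) = [x, f(y,z)] + [f(x,z), y] and f(x, [y,z]) = [f(x,y), z] + [y, f(x,z)] for all x, y, z; moreover f is symmetric but nonzero, hence not skewsymmetric, and f is not of the form (x,y) ↦ λ[x,y] for any λ ∈ ℂ. -/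
theorem stmt6
    (V : Type) [LieRing V] [LieAlgebra ℂ V]
    (L Y M : ℤ → V)
    (b : Module.Basis (Fin 3 × ℤ) ℂ V)
    (hbL : ∀ i : ℤ, b ((0 : Fin 3), i) = L i)
    (hbY : ∀ i : ℤ, b ((1 : Fin 3), i) = Y i)
    (hbM : ∀ i : ℤ, b ((2 : Fin 3), i) = M i)
    (hLL : ∀ m n : ℤ, ⁅L m, L n⁆ = ((m : ℂ) - n) • L (m + n))
    (hLY : ∀ m n : ℤ, ⁅L m, Y n⁆ = ((m : ℂ) / 2 - n) • Y (m + n))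
    (hLM : ∀ m n : ℤ, ⁅L m, M n⁆ = (-(n : ℂ)) • M (m + n))
    (hYY : ∀ m n : ℤ, ⁅Y m, Y n⁆ = ((m : ℂ) - n) • M (m + n))
    (hYM : ∀ m n : ℤ, ⁅Y m, M n⁆ = 0)
    (hMM : ∀ m n : ℤ, ⁅M m, M n⁆ = 0)
    (f : V →ₗ[ℂ] V →ₗ[ℂ] V)
    (hfLL : ∀ m n : ℤ, f (L m) (L n) = (2017 : ℂ) • M (m + n + 2016))
    (hf0 : ∀ x y : V,
      (x ∈ Submodule.span ℂ (Set.range Y ∪ Set.range M) ∨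
       y ∈ Submodule.span ℂ (Set.range Y ∪ Set.range M)) → f x y = 0) :
    (∀ x y z : V, f ⁅x, y⁆ z = ⁅x, f y z⁆ + ⁅f x z, y⁆) ∧
    (∀ x y z : V, f x ⁅y, z⁆ = ⁅f x y, z⁆ + ⁅y, f x z⁆) ∧
    (∀ x y : V, f x y = f y x) ∧
    f ≠ 0 ∧
    ¬ (∀ x y : V, f x y = -f y x) ∧
    ¬ (∃ lam : ℂ, ∀ x y : V, f x y = lam • ⁅x, y⁆) := by
  have hSY : ∀ n : ℤ, Y n ∈ Submodule.span ℂ (Set.range Y ∪ Set.range M) :=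
    fun n => Submodule.subset_span (Or.inl ⟨n, rfl⟩)
  have hSM : ∀ n : ℤ, M n ∈ Submodule.span ℂ (Set.range Y ∪ Set.range M) :=
    fun n => Submodule.subset_span (Or.inr ⟨n, rfl⟩)
  have fY1 : ∀ (n : ℤ) (z : V), f (Y n) z = 0 := fun n z => hf0 _ _ (Or.inl (hSY n))
  have fM1 : ∀ (n : ℤ) (z : V), f (M n) z = 0 := fun n z => hf0 _ _ (Or.inl (hSM n))
  have fY2 : ∀ (x : V) (n : ℤ), f x (Y n) = 0 := fun x n => hf0 _ _ (Or.inr (hSY n))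
  have fM2 : ∀ (x : V) (n : ℤ), f x (M n) = 0 := fun x n => hf0 _ _ (Or.inr (hSM n))
  have hMY : ∀ m n : ℤ, ⁅M m, Y n⁆ = 0 := by
    intro m n; rw [← lie_skew, hYM, neg_zero]
  have hML : ∀ m n : ℤ, ⁅M m, L n⁆ = (m : ℂ) • M (n + m) := by
    intro m n; rw [← lie_skew, hLM]; simp
  have hYL : ∀ m n : ℤ, ⁅Y m, L n⁆ = -(((n : ℂ) / 2 - m) • Y (n + m)) := by
    intro m n; rw [← lie_skew, hLY]
  have hMM' : ∀ m n : ℤ, ⁅M m, M n⁆ = 0 := hMM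
  have hmem : ∀ v : V, v ∈ Submodule.span ℂ (Set.range b) := fun v => by
    rw [b.span_eq]; exact Submodule.mem_top
  -- base cases on basis vectors
  have base1 : ∀ i j k : Fin 3 × ℤ,
      f ⁅b i, b j⁆ (b k) = ⁅b i, f (b j) (b k)⁆ + ⁅f (b i) (b k), b j⁆ := by
    rintro ⟨ki, m⟩ ⟨kj, n⟩ ⟨kk, p⟩
    fin_cases ki <;> fin_cases kj <;> fin_cases kk <;>
      simp only [Fin.zero_eta, Fin.mk_one, Fin.reduceFinMk, Fin.isValue, hbL, hbY, hbM] <;>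
      first
      | (simp [hLL, hLY, hLM, hYY, hYM, hMM, hMY, hML, hYL, hfLL, fY1, fM1, fY2, fM2,
          map_smul, map_neg, smul_lie, lie_smul, smul_smul]; done)
      | (rw [hLL, map_smul, LinearMap.smul_apply, hfLL, hfLL, hfLL, lie_smul, hLM,
            smul_lie, hML,
            show m + n + p + 2016 = m + (n + p + 2016) from by ring,
            show n + (m + p + 2016) = m + (n + p + 2016) from by ring]
         match_scalars <;> push_cast <;> ring)
  have base2 : ∀ i j k : Fin 3 × ℤ,
      f (b i) ⁅b j, b k⁆ = ⁅f (b i) (b j), b k⁆ + ⁅b j, f (b i) (b k)⁆ := by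
    rintro ⟨ki, m⟩ ⟨kj, n⟩ ⟨kk, p⟩
    fin_cases ki <;> fin_cases kj <;> fin_cases kk <;>
      simp only [Fin.zero_eta, Fin.mk_one, Fin.reduceFinMk, Fin.isValue, hbL, hbY, hbM] <;>
      first
      | (simp [hLL, hLY, hLM, hYY, hYM, hMM, hMY, hML, hYL, hfLL, fY1, fM1, fY2, fM2,
          map_smul, map_neg, smul_lie, lie_smul, smul_smul]; done)
      | (rw [hLL, map_smul, hfLL, hfLL, hfLL, smul_lie, hML, lie_smul, hLM,
            show m + (n + p) + 2016 = p + (m + n + 2016) from by ring,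
            show n + (m + p + 2016) = p + (m + n + 2016) from by ring]
         match_scalars <;> push_cast <;> ring)
  have h1 : ∀ x y z : V, f ⁅x, y⁆ z = ⁅x, f y z⁆ + ⁅f x z, y⁆ := by
    intro x
    refine Submodule.span_induction
      (p := fun x _ => ∀ y z : V, f ⁅x, y⁆ z = ⁅x, f y z⁆ + ⁅f x z, y⁆)
      ?_ ?_ ?_ ?_ (hmem x)
    · rintro _ ⟨i, rfl⟩ y
      refine Submodule.span_induction
        (p := fun y _ => ∀ z : V, f ⁅b i, y⁆ z = ⁅b i, f y z⁆ + ⁅f (b i) z, y⁆)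
        ?_ ?_ ?_ ?_ (hmem y)
      · rintro _ ⟨j, rfl⟩ z
        refine Submodule.span_induction
          (p := fun z _ => f ⁅b i, b j⁆ z = ⁅b i, f (b j) z⁆ + ⁅f (b i) z, b j⁆)
          ?_ ?_ ?_ ?_ (hmem z)
        · rintro _ ⟨k, rfl⟩; exact base1 i j k
        · simp
        · intro z₁ z₂ _ _ e1 e2
          simp only [map_add, LinearMap.add_apply, e1, e2, lie_add, add_lie]
          abel
        · intro a z _ e
          simp only [map_smul, LinearMap.smul_apply, e, lie_smul, smul_lie, smul_add]
      · intro z; simp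
      · intro y₁ y₂ _ _ e1 e2 z
        simp only [lie_add, add_lie, map_add, LinearMap.add_apply, e1, e2]
        abel
      · intro a y _ e z
        simp only [lie_smul, smul_lie, map_smul, LinearMap.smul_apply, e, smul_add]
    · intro y z; simp
    · intro x₁ x₂ _ _ e1 e2 y z
      simp only [add_lie, lie_add, map_add, LinearMap.add_apply, e1, e2]
      abel
    · intro a x _ e y z
      simp only [smul_lie, lie_smul, map_smul, LinearMap.smul_apply, e, smul_add]
  have h2 : ∀ x y z : V, f x ⁅y, z⁆ = ⁅f x y, z⁆ + ⁅y, f x z⁆ := by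
    intro x
    refine Submodule.span_induction
      (p := fun x _ => ∀ y z : V, f x ⁅y, z⁆ = ⁅f x y, z⁆ + ⁅y, f x z⁆)
      ?_ ?_ ?_ ?_ (hmem x)
    · rintro _ ⟨i, rfl⟩ y
      refine Submodule.span_induction
        (p := fun y _ => ∀ z : V, f (b i) ⁅y, z⁆ = ⁅f (b i) y, z⁆ + ⁅y, f (b i) z⁆)
        ?_ ?_ ?_ ?_ (hmem y)
      · rintro _ ⟨j, rfl⟩ z
        refine Submodule.span_induction
          (p := fun z _ => f (b i) ⁅b j, z⁆ = ⁅f (b i) (b j), z⁆ + ⁅b j, f (b i) z⁆)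
          ?_ ?_ ?_ ?_ (hmem z)
        · rintro _ ⟨k, rfl⟩; exact base2 i j k
        · simp
        · intro z₁ z₂ _ _ e1 e2
          simp only [lie_add, map_add, LinearMap.add_apply, e1, e2, add_lie]
          abel
        · intro a z _ e
          simp only [lie_smul, map_smul, LinearMap.smul_apply, e, smul_lie, smul_add]
      · intro z; simp
      · intro y₁ y₂ _ _ e1 e2 z
        simp only [add_lie, lie_add, map_add, LinearMap.add_apply, e1, e2]
        abel
      · intro a y _ e z
        simp only [smul_lie, lie_smul, map_smul, LinearMap.smul_apply, e, smul_add]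
    · intro y z; simp
    · intro x₁ x₂ _ _ e1 e2 y z
      simp only [map_add, LinearMap.add_apply, e1, e2, add_lie, lie_add]
      abel
    · intro a x _ e y z
      simp only [map_smul, LinearMap.smul_apply, e, smul_lie, lie_smul, smul_add]
  have h3' : f = f.flip := by
    refine b.ext fun i => b.ext fun j => ?_
    obtain ⟨ki, m⟩ := i; obtain ⟨kj, n⟩ := j
    fin_cases ki <;> fin_cases kj <;>
      simp only [Fin.zero_eta, Fin.mk_one, Fin.reduceFinMk, Fin.isValue, hbL, hbY, hbM, LinearMap.flip_apply] <;>
      simp [hfLL, fY1, fM1, fY2, fM2, add_comm m n]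
  have h3 : ∀ x y : V, f x y = f y x := fun x y =>
    DFunLike.congr_fun (DFunLike.congr_fun h3' x) y
  have hMne : (2017 : ℂ) • M 2016 ≠ 0 := by
    intro h
    rcases smul_eq_zero.mp h with h | h
    · norm_num at h
    · exact b.ne_zero ((2 : Fin 3), 2016) (by rw [hbM]; exact h)
  refine ⟨h1, h2, h3, ?_, ?_, ?_⟩
  · intro h
    apply hMne
    have h0 := hfLL 0 0
    rw [h] at h0
    simpa using h0.symm
  · intro h
    apply hMne
    have h0 := h (L 0) (L 0)
    rw [hfLL 0 0] at h0
    have h4 : (2 : ℂ) • ((2017 : ℂ) • M (0 + 0 + 2016)) = 0 := by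
      rw [two_smul]
      nth_rewrite 2 [h0]
      simp
    rcases smul_eq_zero.mp h4 with h5 | h5
    · norm_num at h5
    · simpa using h5
  · rintro ⟨lam, h⟩
    apply hMne
    have := h (L 0) (L 0)
    rw [hfLL 0 0, hLL 0 0] at this
    simpa using this
end

section
/- Let L be a Lie algebra over ℂ and Ω = (μ_k)_{k ∈ ℤ} a finitely supported family of complex numbers. Define χ_Ω on the twisted Schrödinger–Virasoro Lie algebra SV by χ_Ω(L_m, L_n) = Σ_{k ∈ ℤ} μ_k M_{m+n+k} on basis elements L_m, L_n, and χ_Ω(x, y) = 0 whenever x or y lies in the span of {Y_i, M_i : i ∈ ℤ}, extended bilinearly. Then χ_Ω is a biderivation of SV, and χ_Ω is symmetric: χ_Ω(x,y) = χ_Ω(y,x) for all x, y. -/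
/-!
`χ` vanishes as soon as one argument lies in `W = span {Y i, M i}`, which is an ideal, and its
values lie in `span {M i}`, which commutes with `W`. Hence on triples of basis vectors the Leibniz
rule in the second argument is immediate except for `(L a, L b, L c)`, where both sides equal
`(b - c) • ∑ k, μ k • M (a + b + c + k)`. Symmetry is clear on pairs of basis vectors, and a
symmetric bilinear map that is a derivation in its second argument is one in its first.
-/

section Bilinear

variable {R ι M N : Type*} [CommRing R] [AddCommGroup M] [Module R M] [AddCommGroup N] [Module R N]

theorem LinearMap.apply_comm_of_basis (b : Module.Basis ι R M) (χ : M →ₗ[R] M →ₗ[R] N)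
    (h : ∀ i j, χ (b i) (b j) = χ (b j) (b i)) (x y : M) : χ x y = χ y x :=
  LinearMap.congr_fun₂ (LinearMap.ext_basis b b (B' := χ.flip) h) x y

end Bilinear

section LieAlgebra

variable {R ι V : Type*} [CommRing R] [LieRing V] [LieAlgebra R V]

theorem Finsupp.sum_smul_lie (μ : ι →₀ R) (f : ι → V) (x : V) :
    ⁅μ.sum (fun k c => c • f k), x⁆ = μ.sum fun k c => c • ⁅f k, x⁆ := by
  simp only [Finsupp.sum, sum_lie, smul_lie]

theorem Finsupp.lie_sum_smul (μ : ι →₀ R) (f : ι → V) (x : V) :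
    ⁅x, μ.sum (fun k c => c • f k)⁆ = μ.sum fun k c => c • ⁅x, f k⁆ := by
  simp only [Finsupp.sum, lie_sum, lie_smul]

theorem LinearMap.map_lie_of_basis (b : Module.Basis ι R V) (D : V →ₗ[R] V)
    (h : ∀ i j, D ⁅b i, b j⁆ = ⁅D (b i), b j⁆ + ⁅b i, D (b j)⁆) (y z : V) :
    D ⁅y, z⁆ = ⁅D y, z⁆ + ⁅y, D z⁆ := by
  have := LinearMap.ext_basis b b
    (B := (LieModule.toEnd R V V : V →ₗ[R] V →ₗ[R] V).compr₂ D)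
    (B' := (LieModule.toEnd R V V : V →ₗ[R] V →ₗ[R] V) ∘ₗ D +
      (LieModule.toEnd R V V : V →ₗ[R] V →ₗ[R] V).compl₂ D) (by simpa using h)
  simpa using LinearMap.congr_fun₂ this y z

theorem LinearMap.map_lie_right_of_basis (b : Module.Basis ι R V) (χ : V →ₗ[R] V →ₗ[R] V)
    (h : ∀ i j k, χ (b i) ⁅b j, b k⁆ = ⁅χ (b i) (b j), b k⁆ + ⁅b j, χ (b i) (b k)⁆)
    (x y z : V) : χ x ⁅y, z⁆ = ⁅χ x y, z⁆ + ⁅y, χ x z⁆ := by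
  induction b.mem_span x using Submodule.span_induction with
  | mem _ hx =>
    obtain ⟨i, rfl⟩ := hx
    exact (χ (b i)).map_lie_of_basis b (h i) y z
  | zero => simp
  | add x x' _ _ hx hx' =>
    simp only [map_add, LinearMap.add_apply, add_lie, lie_add, hx, hx']
    abel
  | smul c x _ hx => simp only [map_smul, LinearMap.smul_apply, smul_lie, lie_smul, hx, smul_add]

theorem LinearMap.map_lie_left_of_comm (χ : V →ₗ[R] V →ₗ[R] V) (hcomm : ∀ x y, χ x y = χ y x)
    (hright : ∀ x y z, χ x ⁅y, z⁆ = ⁅χ x y, z⁆ + ⁅y, χ x z⁆) (x y z : V) :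
    χ ⁅x, y⁆ z = ⁅x, χ y z⁆ + ⁅χ x z, y⁆ := by
  rw [hcomm, hright, hcomm z x, hcomm z y, add_comm]

end LieAlgebra

namespace TwistedSV

variable {V : Type*} [LieRing V] [LieAlgebra ℂ V]

structure Relations (L Y M : ℤ → V) : Prop where
  lie_L_L : ∀ m n : ℤ, ⁅L m, L n⁆ = ((m : ℂ) - n) • L (m + n)
  lie_L_Y : ∀ m n : ℤ, ⁅L m, Y n⁆ = ((m : ℂ) / 2 - n) • Y (m + n)
  lie_L_M : ∀ m n : ℤ, ⁅L m, M n⁆ = (-(n : ℂ)) • M (m + n)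
  lie_Y_Y : ∀ m n : ℤ, ⁅Y m, Y n⁆ = ((m : ℂ) - n) • M (m + n)
  lie_Y_M : ∀ m n : ℤ, ⁅Y m, M n⁆ = 0
  lie_M_M : ∀ m n : ℤ, ⁅M m, M n⁆ = 0

structure IsChiOmega (L Y M : ℤ → V) (μ : ℤ →₀ ℂ) (χ : V →ₗ[ℂ] V →ₗ[ℂ] V) : Prop where
  apply_L_L : ∀ m n : ℤ, χ (L m) (L n) = μ.sum fun k c => c • M (m + n + k)
  apply_eq_zero : ∀ x y : V,
    (x ∈ Submodule.span ℂ (Set.range Y ∪ Set.range M) ∨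
      y ∈ Submodule.span ℂ (Set.range Y ∪ Set.range M)) → χ x y = 0

variable {L Y M : ℤ → V}

theorem Relations.lie_mem_span (h : Relations L Y M) {u w : V}
    (hu : u ∈ Set.range L ∪ (Set.range Y ∪ Set.range M)) (hw : w ∈ Set.range Y ∪ Set.range M) :
    ⁅u, w⁆ ∈ Submodule.span ℂ (Set.range Y ∪ Set.range M) := by
  have hY : ∀ n, Y n ∈ Submodule.span ℂ (Set.range Y ∪ Set.range M) :=
    fun n => Submodule.subset_span (.inl ⟨n, rfl⟩)
  have hM : ∀ n, M n ∈ Submodule.span ℂ (Set.range Y ∪ Set.range M) :=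
    fun n => Submodule.subset_span (.inr ⟨n, rfl⟩)
  rcases hw with ⟨n, rfl⟩ | ⟨n, rfl⟩ <;> rcases hu with ⟨m, rfl⟩ | ⟨m, rfl⟩ | ⟨m, rfl⟩
  · rw [h.lie_L_Y]; exact Submodule.smul_mem _ _ (hY _)
  · rw [h.lie_Y_Y]; exact Submodule.smul_mem _ _ (hM _)
  · rw [← lie_skew, h.lie_Y_M, neg_zero]; exact zero_mem _
  · rw [h.lie_L_M]; exact Submodule.smul_mem _ _ (hM _)
  · rw [h.lie_Y_M]; exact zero_mem _
  · rw [h.lie_M_M]; exact zero_mem _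

theorem Relations.lie_M_eq_zero (h : Relations L Y M) (n : ℤ) {w : V}
    (hw : w ∈ Set.range Y ∪ Set.range M) : ⁅M n, w⁆ = 0 := by
  rcases hw with ⟨m, rfl⟩ | ⟨m, rfl⟩
  · rw [← lie_skew, h.lie_Y_M, neg_zero]
  · exact h.lie_M_M n m

variable {μ : ℤ →₀ ℂ} {χ : V →ₗ[ℂ] V →ₗ[ℂ] V}

theorem IsChiOmega.apply_eq_zero_left (hχ : IsChiOmega L Y M μ χ) {w : V}
    (hw : w ∈ Set.range Y ∪ Set.range M) (x : V) : χ w x = 0 :=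
  hχ.apply_eq_zero w x (.inl (Submodule.subset_span hw))

theorem IsChiOmega.apply_eq_zero_right (hχ : IsChiOmega L Y M μ χ) {w : V}
    (hw : w ∈ Set.range Y ∪ Set.range M) (x : V) : χ x w = 0 :=
  hχ.apply_eq_zero x w (.inr (Submodule.subset_span hw))

theorem IsChiOmega.apply_comm_of_mem (hχ : IsChiOmega L Y M μ χ) {u v : V}
    (hu : u ∈ Set.range L ∪ (Set.range Y ∪ Set.range M))
    (hv : v ∈ Set.range L ∪ (Set.range Y ∪ Set.range M)) : χ u v = χ v u := by
  rcases hu with ⟨m, rfl⟩ | hu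
  · rcases hv with ⟨n, rfl⟩ | hv
    · simp only [hχ.apply_L_L, add_comm m n]
    · rw [hχ.apply_eq_zero_left hv, hχ.apply_eq_zero_right hv]
  · rw [hχ.apply_eq_zero_left hu, hχ.apply_eq_zero_right hu]

theorem IsChiOmega.apply_L_L_lie_eq_zero (h : Relations L Y M) (hχ : IsChiOmega L Y M μ χ)
    (m n : ℤ) {w : V} (hw : w ∈ Set.range Y ∪ Set.range M) : ⁅χ (L m) (L n), w⁆ = 0 := by
  simp only [hχ.apply_L_L, Finsupp.sum_smul_lie, h.lie_M_eq_zero _ hw, smul_zero,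
    Finsupp.sum_fun_zero]

theorem IsChiOmega.map_lie_L_L (h : Relations L Y M) (hχ : IsChiOmega L Y M μ χ) (a b c : ℤ) :
    χ (L a) ⁅L b, L c⁆ = ⁅χ (L a) (L b), L c⁆ + ⁅L b, χ (L a) (L c)⁆ := by
  simp only [h.lie_L_L, map_smul, hχ.apply_L_L, Finsupp.sum_smul_lie, Finsupp.lie_sum_smul,
    ← lie_skew (M _) (L _), h.lie_L_M]
  rw [Finsupp.smul_sum, ← Finsupp.sum_add]
  refine Finsupp.sum_congr fun k _ => ?_
  rw [show c + (a + b + k) = a + (b + c) + k by ring,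
    show b + (a + c + k) = a + (b + c) + k by ring]
  module

theorem IsChiOmega.map_lie_of_mem (h : Relations L Y M) (hχ : IsChiOmega L Y M μ χ) {x u v : V}
    (hx : x ∈ Set.range L ∪ (Set.range Y ∪ Set.range M))
    (hu : u ∈ Set.range L ∪ (Set.range Y ∪ Set.range M))
    (hv : v ∈ Set.range L ∪ (Set.range Y ∪ Set.range M)) :
    χ x ⁅u, v⁆ = ⁅χ x u, v⁆ + ⁅u, χ x v⁆ := by
  rcases hx with ⟨a, rfl⟩ | hx
  swap
  · simp only [hχ.apply_eq_zero_left hx, zero_lie, lie_zero, add_zero]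
  rcases hu with ⟨b, rfl⟩ | hu
  · rcases hv with ⟨c, rfl⟩ | hv
    · exact hχ.map_lie_L_L h a b c
    · rw [hχ.apply_eq_zero _ _ (.inr (h.lie_mem_span (.inl ⟨b, rfl⟩) hv)),
        hχ.apply_L_L_lie_eq_zero h a b hv, hχ.apply_eq_zero_right hv, lie_zero, add_zero]
  · rw [← lie_skew, map_neg, hχ.apply_eq_zero _ _ (.inr (h.lie_mem_span hv hu)), neg_zero,
      hχ.apply_eq_zero_right hu, zero_lie, zero_add]
    rcases hv with ⟨c, rfl⟩ | hv
    · rw [← lie_skew, hχ.apply_L_L_lie_eq_zero h a c hu, neg_zero]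
    · rw [hχ.apply_eq_zero_right hv, lie_zero]

end TwistedSV

theorem stmt7
    (V : Type) [LieRing V] [LieAlgebra ℂ V]
    (L Y M : ℤ → V)
    (b : Module.Basis (Fin 3 × ℤ) ℂ V)
    (hbL : ∀ i : ℤ, b ((0 : Fin 3), i) = L i)
    (hbY : ∀ i : ℤ, b ((1 : Fin 3), i) = Y i)
    (hbM : ∀ i : ℤ, b ((2 : Fin 3), i) = M i)
    (hLL : ∀ m n : ℤ, ⁅L m, L n⁆ = ((m : ℂ) - n) • L (m + n))
    (hLY : ∀ m n : ℤ, ⁅L m, Y n⁆ = ((m : ℂ) / 2 - n) • Y (m + n))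
    (hLM : ∀ m n : ℤ, ⁅L m, M n⁆ = (-(n : ℂ)) • M (m + n))
    (hYY : ∀ m n : ℤ, ⁅Y m, Y n⁆ = ((m : ℂ) - n) • M (m + n))
    (hYM : ∀ m n : ℤ, ⁅Y m, M n⁆ = 0)
    (hMM : ∀ m n : ℤ, ⁅M m, M n⁆ = 0)
    (μ : ℤ →₀ ℂ)
    (χ : V →ₗ[ℂ] V →ₗ[ℂ] V)
    (hχLL : ∀ m n : ℤ, χ (L m) (L n) = μ.sum fun k c => c • M (m + n + k))
    (hχ0 : ∀ x y : V,
      (x ∈ Submodule.span ℂ (Set.range Y ∪ Set.range M) ∨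
       y ∈ Submodule.span ℂ (Set.range Y ∪ Set.range M)) → χ x y = 0) :
    (∀ x y z : V, χ ⁅x, y⁆ z = ⁅x, χ y z⁆ + ⁅χ x z, y⁆) ∧
    (∀ x y z : V, χ x ⁅y, z⁆ = ⁅χ x y, z⁆ + ⁅y, χ x z⁆) ∧
    (∀ x y : V, χ x y = χ y x) := by
  have h : TwistedSV.Relations L Y M := ⟨hLL, hLY, hLM, hYY, hYM, hMM⟩
  have hχ : TwistedSV.IsChiOmega L Y M μ χ := ⟨hχLL, hχ0⟩
  have hb : ∀ p, b p ∈ Set.range L ∪ (Set.range Y ∪ Set.range M) := by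
    rintro ⟨i, n⟩
    fin_cases i
    exacts [.inl ⟨n, (hbL n).symm⟩, .inr (.inl ⟨n, (hbY n).symm⟩), .inr (.inr ⟨n, (hbM n).symm⟩)]
  have hcomm := χ.apply_comm_of_basis b fun p q => hχ.apply_comm_of_mem (hb p) (hb q)
  have hright := χ.map_lie_right_of_basis b fun p q r => hχ.map_lie_of_mem h (hb p) (hb q) (hb r)
  exact ⟨χ.map_lie_left_of_comm hcomm hright, hright, hcomm⟩
end

section
/- Let (L, [,], ·) be a commutative post-Lie algebra. Then the bilinear map f : L × L → L defined by f(x, y) = x · y is a biderivation of the Lie algebra (L, [,]); that is, f([x,y], z) = [x, f(y,z)] + [f(x,z), y] and f(x, [y,z]) = [f(x,y), z] + [y, f(x,z)] for all x, y, z ∈ L. -/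
theorem stmt9 (L : Type*) [LieRing L] [LieAlgebra ℂ L]
    (mul : L →ₗ[ℂ] L →ₗ[ℂ] L)
    (hcomm : ∀ x y : L, mul x y = mul y x)
    (hpost : ∀ x y z : L, mul ⁅x, y⁆ z = mul x (mul y z) - mul y (mul x z))
    (hder : ∀ x y z : L, mul x ⁅y, z⁆ = ⁅mul x y, z⁆ + ⁅y, mul x z⁆) :
    (∀ x y z : L, mul ⁅x, y⁆ z = ⁅x, mul y z⁆ + ⁅mul x z, y⁆) ∧
    (∀ x y z : L, mul x ⁅y, z⁆ = ⁅mul x y, z⁆ + ⁅y, mul x z⁆) := by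
  refine ⟨fun x y z => ?_, hder⟩
  rw [hcomm, hder, hcomm z x, hcomm z y, add_comm]
end

section
/- Let SV be the twisted Schrödinger–Virasoro Lie algebra and let · be a bilinear product on SV of the form x·y = λ[x,y] + χ_Ω(x,y) for some λ ∈ ℂ and finitely supported Ω = (μ_k). If · is commutative (x·y = y·x for all x, y) and satisfies [x,y]·z = x·(y·z) - y·(x·z) for all x, y, z, then λ = 0 and μ_k = 0 for all k, so x·y = 0 identically. -/
/-!
Commutativity of `x · y = λ⁅x, y⁆ + χ(x, y)` on the symmetric pair `L₀, L₁` leaves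
`2λ⁅L₀, L₁⁆ = 0`, so `λ = 0` and `·` is `χ`. The identity for `x = L₁`, `y = z = L₀` then reads
`χ(L₁, L₀) = χ(L₁, χ(L₀, L₀)) - χ(L₀, χ(L₁, L₀)) = 0`, because `χ` takes values in the span of
the `M`'s, on which it vanishes. As the `M_{1+k}` are linearly independent, all `μ_k` vanish,
hence `χ` vanishes on basis pairs and so identically.
-/

theorem eq_zero_of_smul_lie_eq_smul_lie_swap {K V : Type*} [Field K] [NeZero (2 : K)]
    [LieRing V] [Module K V] {lam : K} {x y : V}
    (h : lam • ⁅x, y⁆ = lam • ⁅y, x⁆) (hxy : ⁅x, y⁆ ≠ 0) : lam = 0 := by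
  rw [← lie_skew y x, smul_neg, eq_neg_iff_add_eq_zero, ← two_smul K, smul_smul] at h
  exact (mul_eq_zero.mp ((smul_eq_zero.mp h).resolve_right hxy)).resolve_left two_ne_zero

theorem Module.Basis.eq_zero_of_sum_smul_shift_eq_zero {ι G K V : Type*} [Add G]
    [IsLeftCancelAdd G] [Ring K] [AddCommGroup V] [Module K V] (b : Module.Basis (ι × G) K V)
    (i : ι) (w : G) {μ : G →₀ K} (h : (μ.sum fun k c => c • b (i, w + k)) = 0) : μ = 0 := by
  have hinj : Function.Injective fun k : G => (i, w + k) :=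
    fun _ _ hk => add_left_cancel (Prod.ext_iff.mp hk).2
  exact linearIndependent_iff.mp (b.linearIndependent.comp _ hinj) μ h

theorem LinearMap.eq_zero_of_basis_of_eq_zero_of_mem {ι K V W : Type*} [CommRing K]
    [AddCommGroup V] [Module K V] [AddCommGroup W] [Module K W] (b : Module.Basis ι K V)
    (p : ι → Prop) (S : Submodule K V) (hbS : ∀ i, ¬p i → b i ∈ S) (B : V →ₗ[K] V →ₗ[K] W)
    (hB : ∀ x y, x ∈ S ∨ y ∈ S → B x y = 0) (hBp : ∀ i j, p i → p j → B (b i) (b j) = 0) :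
    B = 0 := by
  refine LinearMap.ext_basis b b fun i j => ?_
  rw [LinearMap.zero_apply, LinearMap.zero_apply]
  by_cases hi : p i
  · by_cases hj : p j
    · exact hBp i j hi hj
    · exact hB _ _ (Or.inr (hbS j hj))
  · exact hB _ _ (Or.inl (hbS i hi))

theorem stmt11_general
    (V : Type) [LieRing V] [LieAlgebra ℂ V]
    (L Y M : ℤ → V)
    (b : Module.Basis (Fin 3 × ℤ) ℂ V)
    (hbL : ∀ i : ℤ, b ((0 : Fin 3), i) = L i)
    (hbY : ∀ i : ℤ, b ((1 : Fin 3), i) = Y i)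
    (hbM : ∀ i : ℤ, b ((2 : Fin 3), i) = M i)
    (hLL : ∀ m n : ℤ, ⁅L m, L n⁆ = ((m : ℂ) - n) • L (m + n))
    (lam : ℂ) (μ : ℤ →₀ ℂ)
    (χ : V →ₗ[ℂ] V →ₗ[ℂ] V)
    (hχLL : ∀ m n : ℤ, χ (L m) (L n) = μ.sum fun k c => c • M (m + n + k))
    (hχ0 : ∀ x y : V,
      (x ∈ Submodule.span ℂ (Set.range Y ∪ Set.range M) ∨
       y ∈ Submodule.span ℂ (Set.range Y ∪ Set.range M)) → χ x y = 0)
    (mul : V → V → V)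
    (hmul : ∀ x y : V, mul x y = lam • ⁅x, y⁆ + χ x y)
    (hcomm : ∀ x y : V, mul x y = mul y x)
    (hpost : ∀ x y z : V, mul ⁅x, y⁆ z = mul x (mul y z) - mul y (mul x z)) :
    lam = 0 ∧ (∀ k : ℤ, μ k = 0) ∧ (∀ x y : V, mul x y = 0) := by
  set S := Submodule.span ℂ (Set.range Y ∪ Set.range M)
  have hχLL_mem (m n : ℤ) : χ (L m) (L n) ∈ S := by
    rw [hχLL]
    exact Submodule.sum_mem _ fun k _ =>
      Submodule.smul_mem _ _ (Submodule.subset_span (Or.inr ⟨_, rfl⟩))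
  have hlam : lam = 0 := by
    refine eq_zero_of_smul_lie_eq_smul_lie_swap (x := L 0) (y := L 1) ?_ ?_
    · have h := hcomm (L 0) (L 1)
      rwa [hmul, hmul, hχLL, hχLL, zero_add, add_zero, add_left_inj] at h
    · rw [hLL, ← hbL]
      exact smul_ne_zero (by norm_num) (b.ne_zero _)
  have hχ_lie (x y z : V) : χ ⁅x, y⁆ z = χ x (χ y z) - χ y (χ x z) := by
    simpa only [hmul, hlam, zero_smul, zero_add] using hpost x y z
  have hμ : μ = 0 := by
    have h := hχ_lie (L 1) (L 0) (L 0)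
    rw [hχ0 _ _ (Or.inr (hχLL_mem 0 0)), hχ0 _ _ (Or.inr (hχLL_mem 1 0)), sub_self, hLL,
      map_smul, LinearMap.smul_apply, hχLL] at h
    simp only [← hbM, Int.cast_one, Int.cast_zero, sub_zero, one_smul] at h
    exact b.eq_zero_of_sum_smul_shift_eq_zero 2 _ h
  have hb_mem : ∀ q : Fin 3 × ℤ, q.1 ≠ 0 → b q ∈ S := by
    rintro ⟨i, m⟩ hi
    fin_cases i
    · exact absurd rfl hi
    · exact Submodule.subset_span (Or.inl ⟨m, (hbY m).symm⟩)
    · exact Submodule.subset_span (Or.inr ⟨m, (hbM m).symm⟩)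
  have hχ : χ = 0 := by
    refine LinearMap.eq_zero_of_basis_of_eq_zero_of_mem b (·.1 = 0) S hb_mem χ hχ0 ?_
    rintro ⟨i, m⟩ ⟨j, n⟩ (rfl : i = 0) (rfl : j = 0)
    rw [hbL, hbL, hχLL, hμ, Finsupp.sum_zero_index]
  refine ⟨hlam, fun k => by simp [hμ], fun x y => by simp [hmul, hlam, hχ]⟩

theorem stmt11
    (V : Type) [LieRing V] [LieAlgebra ℂ V]
    (L Y M : ℤ → V)
    (b : Module.Basis (Fin 3 × ℤ) ℂ V)
    (hbL : ∀ i : ℤ, b ((0 : Fin 3), i) = L i)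
    (hbY : ∀ i : ℤ, b ((1 : Fin 3), i) = Y i)
    (hbM : ∀ i : ℤ, b ((2 : Fin 3), i) = M i)
    (hLL : ∀ m n : ℤ, ⁅L m, L n⁆ = ((m : ℂ) - n) • L (m + n))
    (hLY : ∀ m n : ℤ, ⁅L m, Y n⁆ = ((m : ℂ) / 2 - n) • Y (m + n))
    (hLM : ∀ m n : ℤ, ⁅L m, M n⁆ = (-(n : ℂ)) • M (m + n))
    (hYY : ∀ m n : ℤ, ⁅Y m, Y n⁆ = ((m : ℂ) - n) • M (m + n))
    (hYM : ∀ m n : ℤ, ⁅Y m, M n⁆ = 0)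
    (hMM : ∀ m n : ℤ, ⁅M m, M n⁆ = 0)
    (lam : ℂ) (μ : ℤ →₀ ℂ)
    (χ : V →ₗ[ℂ] V →ₗ[ℂ] V)
    (hχLL : ∀ m n : ℤ, χ (L m) (L n) = μ.sum fun k c => c • M (m + n + k))
    (hχ0 : ∀ x y : V,
      (x ∈ Submodule.span ℂ (Set.range Y ∪ Set.range M) ∨
       y ∈ Submodule.span ℂ (Set.range Y ∪ Set.range M)) → χ x y = 0)
    (mul : V → V → V)
    (hmul : ∀ x y : V, mul x y = lam • ⁅x, y⁆ + χ x y)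
    (hcomm : ∀ x y : V, mul x y = mul y x)
    (hpost : ∀ x y z : V, mul ⁅x, y⁆ z = mul x (mul y z) - mul y (mul x z)) :
    lam = 0 ∧ (∀ k : ℤ, μ k = 0) ∧ (∀ x y : V, mul x y = 0) :=
  stmt11_general V L Y M b hbL hbY hbM hLL lam μ χ hχLL hχ0 mul hmul hcomm hpost
end

section
/- In the twisted Schrödinger–Virasoro Lie algebra SV, the maps D₁, D₂, D₃ defined on basis elements by D₁(L_m) = M_m, D₁(Y_m) = D₁(M_m) = 0; D₂(L_m) = m·M_m, D₂(Y_m) = D₂(M_m) = 0; D₃(L_m) = 0, D₃(Y_m) = Y_m, D₃(M_m) = 2·M_m, extended linearly, are derivations of SV: D_i([x,y]) = [D_i(x), y] + [x, D_i(y)] for all x, y ∈ SV and i = 1, 2, 3. -/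
/-! A linear map is a derivation as soon as the Leibniz rule holds on pairs of basis vectors, since
both sides of the rule are bilinear; by antisymmetry of the bracket it even suffices to check it on
unordered pairs. For `SV` this leaves six families of pairs of generators `L`, `Y`, `M`, each a
one-line computation with the structure constants. -/

section Leibniz

variable {R 𝔤 : Type*} [CommRing R] [LieRing 𝔤] [LieAlgebra R 𝔤]

def LeibnizAt (D : 𝔤 →ₗ[R] 𝔤) (x y : 𝔤) : Prop :=
  D ⁅x, y⁆ = ⁅D x, y⁆ + ⁅x, D y⁆

theorem LeibnizAt.swap {D : 𝔤 →ₗ[R] 𝔤} {x y : 𝔤} (h : LeibnizAt D x y) : LeibnizAt D y x := by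
  rw [LeibnizAt, ← lie_skew, map_neg, h, neg_add, lie_skew, lie_skew, add_comm]

theorem Module.Basis.leibnizAt {ι : Type*} (b : Module.Basis ι R 𝔤) {D : 𝔤 →ₗ[R] 𝔤}
    (h : ∀ i j, LeibnizAt D (b i) (b j)) (x y : 𝔤) : LeibnizAt D x y := by
  let bracket : 𝔤 →ₗ[R] 𝔤 →ₗ[R] 𝔤 := LieModule.toEnd R 𝔤 𝔤
  have key : bracket.compr₂ D = bracket ∘ₗ D + bracket.compl₂ D :=
    LinearMap.ext_basis b b fun i j => by simpa [bracket, LeibnizAt] using h i j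
  simpa [bracket, LeibnizAt] using LinearMap.congr_fun₂ key x y

theorem leibnizAt_of_basis_fin_three {ι : Type*} (b : Module.Basis (Fin 3 × ι) R 𝔤)
    {X Y Z : ι → 𝔤} (hX : ∀ i, b (0, i) = X i) (hY : ∀ i, b (1, i) = Y i)
    (hZ : ∀ i, b (2, i) = Z i) {D : 𝔤 →ₗ[R] 𝔤}
    (hXX : ∀ m n, LeibnizAt D (X m) (X n)) (hXY : ∀ m n, LeibnizAt D (X m) (Y n))
    (hXZ : ∀ m n, LeibnizAt D (X m) (Z n)) (hYY : ∀ m n, LeibnizAt D (Y m) (Y n))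
    (hYZ : ∀ m n, LeibnizAt D (Y m) (Z n)) (hZZ : ∀ m n, LeibnizAt D (Z m) (Z n))
    (x y : 𝔤) : LeibnizAt D x y := by
  refine b.leibnizAt (fun ⟨i, m⟩ ⟨j, n⟩ => ?_) x y
  fin_cases i <;> fin_cases j <;> simp only [Fin.zero_eta, Fin.mk_one, Fin.reduceFinMk, hX, hY, hZ]
  all_goals first
    | exact hXX m n | exact hXY m n | exact hXZ m n | exact hYY m n | exact hYZ m n | exact hZZ m n
    | exact (hXY n m).swap | exact (hXZ n m).swap | exact (hYZ n m).swap

end Leibniz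

theorem stmt12
    (V : Type) [LieRing V] [LieAlgebra ℂ V]
    (L Y M : ℤ → V)
    (b : Module.Basis (Fin 3 × ℤ) ℂ V)
    (hbL : ∀ i : ℤ, b ((0 : Fin 3), i) = L i)
    (hbY : ∀ i : ℤ, b ((1 : Fin 3), i) = Y i)
    (hbM : ∀ i : ℤ, b ((2 : Fin 3), i) = M i)
    (hLL : ∀ m n : ℤ, ⁅L m, L n⁆ = ((m : ℂ) - n) • L (m + n))
    (hLY : ∀ m n : ℤ, ⁅L m, Y n⁆ = ((m : ℂ) / 2 - n) • Y (m + n))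
    (hLM : ∀ m n : ℤ, ⁅L m, M n⁆ = (-(n : ℂ)) • M (m + n))
    (hYY : ∀ m n : ℤ, ⁅Y m, Y n⁆ = ((m : ℂ) - n) • M (m + n))
    (hYM : ∀ m n : ℤ, ⁅Y m, M n⁆ = 0)
    (hMM : ∀ m n : ℤ, ⁅M m, M n⁆ = 0)
    (D₁ D₂ D₃ : V →ₗ[ℂ] V)
    (hD1L : ∀ m : ℤ, D₁ (L m) = M m) (hD1Y : ∀ m : ℤ, D₁ (Y m) = 0)
    (hD1M : ∀ m : ℤ, D₁ (M m) = 0)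
    (hD2L : ∀ m : ℤ, D₂ (L m) = (m : ℂ) • M m) (hD2Y : ∀ m : ℤ, D₂ (Y m) = 0)
    (hD2M : ∀ m : ℤ, D₂ (M m) = 0)
    (hD3L : ∀ m : ℤ, D₃ (L m) = 0) (hD3Y : ∀ m : ℤ, D₃ (Y m) = Y m)
    (hD3M : ∀ m : ℤ, D₃ (M m) = (2 : ℂ) • M m) :
    (∀ x y : V, D₁ ⁅x, y⁆ = ⁅D₁ x, y⁆ + ⁅x, D₁ y⁆) ∧
    (∀ x y : V, D₂ ⁅x, y⁆ = ⁅D₂ x, y⁆ + ⁅x, D₂ y⁆) ∧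
    (∀ x y : V, D₃ ⁅x, y⁆ = ⁅D₃ x, y⁆ + ⁅x, D₃ y⁆) := by
  have hML : ∀ m n : ℤ, ⁅M m, L n⁆ = (m : ℂ) • M (m + n) := by
    intro m n; rw [← lie_skew, hLM, add_comm n m]; module
  have hMY : ∀ m n : ℤ, ⁅M m, Y n⁆ = 0 := by
    intro m n; rw [← lie_skew, hYM, neg_zero]
  refine ⟨?_, ?_, ?_⟩ <;> refine leibnizAt_of_basis_fin_three b hbL hbY hbM ?_ ?_ ?_ ?_ ?_ ?_ <;>
  · intro m n
    simp only [LeibnizAt, hLL, hLY, hLM, hYY, hYM, hMM, hML, hMY, hD1L, hD1Y, hD1M, hD2L, hD2Y,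
      hD2M, hD3L, hD3Y, hD3M, map_smul, map_zero, smul_zero, zero_lie, lie_zero, lie_smul,
      smul_lie, add_zero, zero_add, smul_smul]
    try module
end

section
/- None of the derivations D₁, D₂, D₃ of the twisted Schrödinger–Virasoro Lie algebra SV (defined by D₁(L_m)=M_m, D₂(L_m)=m M_m, D₃(Y_m)=Y_m, D₃(M_m)=2M_m, zero on other basis vectors) is an inner derivation: for each i ∈ {1,2,3} there is no x ∈ SV with D_i = ad x. -/
/-!
If `D = ad x`, then for every `z` the vector `D z = -⁅z, x⁆` lies in the image of `ad z`, so any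
basis coordinate that `ad z` kills on every basis vector is also zero on `D z`. For `D₁` and `D₂`
take `z = L m` (with `m = 1` for `D₂`): `ad (L m)` shifts degrees by `m` and multiplies `M n` by
`-n`, so it never produces an `M m`-component, whereas `D (L m)` is a nonzero multiple of `M m`.
For `D₃` take the central element `z = M 0`, for which `D₃ (M 0) = 2 M 0 ≠ 0`.
-/

open Module

theorem not_exists_forall_eq_lie_of_coord {R A ι : Type*} [CommRing R] [LieRing A]
    [LieAlgebra R A] (b : Basis ι R A) (D : A →ₗ[R] A) {z : A} {p : ι}
    (hz : ∀ j, b.coord p ⁅z, b j⁆ = 0) (hD : b.coord p (D z) ≠ 0) :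
    ¬ ∃ x : A, ∀ y : A, D y = ⁅x, y⁆ := by
  rintro ⟨x, hx⟩
  have hcoord : b.coord p ∘ₗ LieAlgebra.ad R A z = 0 := b.ext hz
  apply hD
  rw [hx, ← lie_skew, map_neg, neg_eq_zero]
  exact LinearMap.congr_fun hcoord x

theorem Module.Basis.coord_smul_self {R M ι : Type*} [CommRing R] [AddCommGroup M] [Module R M]
    [DecidableEq ι] (b : Basis ι R M) (c : R) (p q : ι) :
    b.coord p (c • b q) = if q = p then c else 0 := by
  simp [Finsupp.single_apply]

theorem coord_M_lie_L {V : Type} [LieRing V] [LieAlgebra ℂ V] (L Y M : ℤ → V)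
    (b : Basis (Fin 3 × ℤ) ℂ V)
    (hbL : ∀ i : ℤ, b ((0 : Fin 3), i) = L i)
    (hbY : ∀ i : ℤ, b ((1 : Fin 3), i) = Y i)
    (hbM : ∀ i : ℤ, b ((2 : Fin 3), i) = M i)
    (hLL : ∀ m n : ℤ, ⁅L m, L n⁆ = ((m : ℂ) - n) • L (m + n))
    (hLY : ∀ m n : ℤ, ⁅L m, Y n⁆ = ((m : ℂ) / 2 - n) • Y (m + n))
    (hLM : ∀ m n : ℤ, ⁅L m, M n⁆ = (-(n : ℂ)) • M (m + n)) (m : ℤ) (j : Fin 3 × ℤ) :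
    b.coord ((2 : Fin 3), m) ⁅L m, b j⁆ = 0 := by
  obtain ⟨f, i⟩ := j
  match f with
  | 0 =>
    rw [hbL, hLL, ← hbL, b.coord_smul_self]
    simp
  | 1 =>
    rw [hbY, hLY, ← hbY, b.coord_smul_self]
    simp
  | 2 =>
    rw [hbM, hLM, ← hbM, b.coord_smul_self]
    simp +contextual

theorem lie_M_zero_eq_zero {V : Type} [LieRing V] [LieAlgebra ℂ V] (L Y M : ℤ → V)
    (b : Basis (Fin 3 × ℤ) ℂ V)
    (hbL : ∀ i : ℤ, b ((0 : Fin 3), i) = L i)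
    (hbY : ∀ i : ℤ, b ((1 : Fin 3), i) = Y i)
    (hbM : ∀ i : ℤ, b ((2 : Fin 3), i) = M i)
    (hLM : ∀ m n : ℤ, ⁅L m, M n⁆ = (-(n : ℂ)) • M (m + n))
    (hYM : ∀ m n : ℤ, ⁅Y m, M n⁆ = 0)
    (hMM : ∀ m n : ℤ, ⁅M m, M n⁆ = 0) (y : V) :
    ⁅M 0, y⁆ = 0 := by
  have had : LieAlgebra.ad ℂ V (M 0) = 0 := by
    refine b.ext fun ⟨f, i⟩ => ?_
    match f with
    | 0 => rw [LieAlgebra.ad_apply, hbL, ← lie_skew, hLM, Int.cast_zero, neg_zero, zero_smul,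
        neg_zero, LinearMap.zero_apply]
    | 1 => rw [LieAlgebra.ad_apply, hbY, ← lie_skew, hYM, neg_zero, LinearMap.zero_apply]
    | 2 => rw [LieAlgebra.ad_apply, hbM, hMM, LinearMap.zero_apply]
  exact LinearMap.congr_fun had y

theorem stmt13_general
    (V : Type) [LieRing V] [LieAlgebra ℂ V]
    (L Y M : ℤ → V)
    (b : Module.Basis (Fin 3 × ℤ) ℂ V)
    (hbL : ∀ i : ℤ, b ((0 : Fin 3), i) = L i)
    (hbY : ∀ i : ℤ, b ((1 : Fin 3), i) = Y i)
    (hbM : ∀ i : ℤ, b ((2 : Fin 3), i) = M i)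
    (hLL : ∀ m n : ℤ, ⁅L m, L n⁆ = ((m : ℂ) - n) • L (m + n))
    (hLY : ∀ m n : ℤ, ⁅L m, Y n⁆ = ((m : ℂ) / 2 - n) • Y (m + n))
    (hLM : ∀ m n : ℤ, ⁅L m, M n⁆ = (-(n : ℂ)) • M (m + n))
    (hYM : ∀ m n : ℤ, ⁅Y m, M n⁆ = 0)
    (hMM : ∀ m n : ℤ, ⁅M m, M n⁆ = 0)
    (D₁ D₂ D₃ : V →ₗ[ℂ] V)
    (hD1L : ∀ m : ℤ, D₁ (L m) = M m)
    (hD2L : ∀ m : ℤ, D₂ (L m) = (m : ℂ) • M m)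
    (hD3M : ∀ m : ℤ, D₃ (M m) = (2 : ℂ) • M m) :
    (¬ ∃ x : V, ∀ y : V, D₁ y = ⁅x, y⁆) ∧
    (¬ ∃ x : V, ∀ y : V, D₂ y = ⁅x, y⁆) ∧
    (¬ ∃ x : V, ∀ y : V, D₃ y = ⁅x, y⁆) := by
  have hL := coord_M_lie_L L Y M b hbL hbY hbM hLL hLY hLM
  refine ⟨?_, ?_, ?_⟩
  · refine not_exists_forall_eq_lie_of_coord b D₁ (hL 0) ?_
    simp [hD1L, ← hbM]
  · refine not_exists_forall_eq_lie_of_coord b D₂ (hL 1) ?_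
    simp [hD2L, ← hbM]
  · have hcentral := lie_M_zero_eq_zero L Y M b hbL hbY hbM hLM hYM hMM
    refine not_exists_forall_eq_lie_of_coord b D₃ (p := ((2 : Fin 3), 0))
      (fun j => by rw [hcentral, map_zero]) ?_
    rw [hD3M, ← hbM, b.coord_smul_self]
    simp

theorem stmt13
    (V : Type) [LieRing V] [LieAlgebra ℂ V]
    (L Y M : ℤ → V)
    (b : Module.Basis (Fin 3 × ℤ) ℂ V)
    (hbL : ∀ i : ℤ, b ((0 : Fin 3), i) = L i)
    (hbY : ∀ i : ℤ, b ((1 : Fin 3), i) = Y i)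
    (hbM : ∀ i : ℤ, b ((2 : Fin 3), i) = M i)
    (hLL : ∀ m n : ℤ, ⁅L m, L n⁆ = ((m : ℂ) - n) • L (m + n))
    (hLY : ∀ m n : ℤ, ⁅L m, Y n⁆ = ((m : ℂ) / 2 - n) • Y (m + n))
    (hLM : ∀ m n : ℤ, ⁅L m, M n⁆ = (-(n : ℂ)) • M (m + n))
    (hYY : ∀ m n : ℤ, ⁅Y m, Y n⁆ = ((m : ℂ) - n) • M (m + n))
    (hYM : ∀ m n : ℤ, ⁅Y m, M n⁆ = 0)
    (hMM : ∀ m n : ℤ, ⁅M m, M n⁆ = 0)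
    (D₁ D₂ D₃ : V →ₗ[ℂ] V)
    (hD1L : ∀ m : ℤ, D₁ (L m) = M m) (hD1Y : ∀ m : ℤ, D₁ (Y m) = 0)
    (hD1M : ∀ m : ℤ, D₁ (M m) = 0)
    (hD2L : ∀ m : ℤ, D₂ (L m) = (m : ℂ) • M m) (hD2Y : ∀ m : ℤ, D₂ (Y m) = 0)
    (hD2M : ∀ m : ℤ, D₂ (M m) = 0)
    (hD3L : ∀ m : ℤ, D₃ (L m) = 0) (hD3Y : ∀ m : ℤ, D₃ (Y m) = Y m)
    (hD3M : ∀ m : ℤ, D₃ (M m) = (2 : ℂ) • M m) :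
    (¬ ∃ x : V, ∀ y : V, D₁ y = ⁅x, y⁆) ∧
    (¬ ∃ x : V, ∀ y : V, D₂ y = ⁅x, y⁆) ∧
    (¬ ∃ x : V, ∀ y : V, D₃ y = ⁅x, y⁆) :=
  stmt13_general V L Y M b hbL hbY hbM hLL hLY hLM hYM hMM D₁ D₂ D₃ hD1L hD2L hD3M
end
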